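/- arXiv:math/0607160 — 9 statements merged into one kernel-verified Lean document; each statement's English description precedes it below -/
import Mathlib

section
/- Let R be a commutative Noetherian ring of prime characteristic p and 𝔞 an ideal of R. Then there exists a power Q of p such that (𝔞^F)^[Q] = 𝔞^[Q], where 𝔞^F is the Frobenius closure of 𝔞. -/
/-- The `q`-th Frobenius power of a set `S`: the ideal generated by `q`-th powers
of elements of `S`. -/
def frobPow {R : Type*} [CommRing R] (S : Set R) (q : ℕ) : Ideal R :=
  Ideal.span ((· ^ q) '' S)

/-- The Frobenius closure of an ideal `I` in a ring of characteristic `p`. -/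
def frobClosure {R : Type*} [CommRing R] (p : ℕ) (I : Ideal R) : Set R :=
  {r | ∃ n : ℕ, r ^ p ^ n ∈ frobPow (I : Set R) (p ^ n)}

lemma aux_pow_mem {R : Type*} [CommRing R] (p : ℕ) [Fact p.Prime] [CharP R p]
    (T : Set R) (k : ℕ) {x : R} (hx : x ∈ Ideal.span T) :
    x ^ p ^ k ∈ Ideal.span ((· ^ p ^ k) '' T) := by
  induction hx using Submodule.span_induction with
  | mem t ht => exact Ideal.subset_span ⟨t, ht, rfl⟩
  | zero =>
      rw [zero_pow (pow_ne_zero k (Fact.out : p.Prime).ne_zero)]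
      exact Ideal.zero_mem _
  | add a b _ _ ha hb => rw [add_pow_char_pow]; exact Ideal.add_mem _ ha hb
  | smul c a _ h => rw [smul_eq_mul, mul_pow]; exact Ideal.mul_mem_left _ _ h

def Jn {R : Type*} [CommRing R] (p : ℕ) (hp : p.Prime) [CharP R p] (I : Ideal R) (n : ℕ) :
    Ideal R where
  carrier := {r | r ^ p ^ n ∈ frobPow (I : Set R) (p ^ n)}
  zero_mem' := by
    simp only [Set.mem_setOf_eq, zero_pow (pow_ne_zero n hp.ne_zero)]
    exact Ideal.zero_mem _
  add_mem' := by
    intro a b ha hb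
    have : Fact p.Prime := ⟨hp⟩
    simp only [Set.mem_setOf_eq, add_pow_char_pow]
    exact Ideal.add_mem _ ha hb
  smul_mem' := by
    intro c a ha
    simp only [Set.mem_setOf_eq, smul_eq_mul, mul_pow]
    exact Ideal.mul_mem_left _ _ ha

lemma Jn_mono {R : Type*} [CommRing R] (p : ℕ) (hp : p.Prime) [CharP R p] (I : Ideal R) :
    Monotone (Jn p hp I) := by
  have : Fact p.Prime := ⟨hp⟩
  refine monotone_nat_of_le_succ fun n r hr => ?_
  have h := aux_pow_mem p ((· ^ p ^ n) '' (I : Set R)) 1 hr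
  have himg : ((· ^ p ^ 1) '' ((· ^ p ^ n) '' (I : Set R))) = (· ^ p ^ (n+1)) '' (I : Set R) := by
    rw [← Set.image_comp]
    ext x
    constructor
    · rintro ⟨a, ha, rfl⟩
      exact ⟨a, ha, by simp [← pow_mul, pow_succ]⟩
    · rintro ⟨a, ha, rfl⟩
      exact ⟨a, ha, by simp [← pow_mul, pow_succ]⟩
  rw [himg] at h
  show r ^ p ^ (n+1) ∈ frobPow (I : Set R) (p ^ (n+1))
  rw [show r ^ p ^ (n+1) = (r ^ p ^ n) ^ p ^ 1 by rw [← pow_mul, pow_succ, pow_one]]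
  exact h

/-- there is a power `Q = p^n` of `p` with `(I^F)^{[Q]} = I^{[Q]}`. -/
theorem exists_frobPow_frobClosure_eq {R : Type*} [CommRing R] [IsNoetherianRing R]
    (p : ℕ) (hp : p.Prime) [CharP R p] (I : Ideal R) :
    ∃ n : ℕ, frobPow (frobClosure p I) (p ^ n) = frobPow (I : Set R) (p ^ n) := by
  have : Fact p.Prime := ⟨hp⟩
  obtain ⟨n, hn⟩ := (monotone_stabilizes_iff_noetherian.mpr inferInstance)
    ⟨Jn p hp I, Jn_mono p hp I⟩
  have hset : frobClosure p I = (Jn p hp I n : Set R) := by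
    ext r
    constructor
    · rintro ⟨m, hm⟩
      rcases le_total m n with h | h
      · exact Jn_mono p hp I h hm
      · have hEq : Jn p hp I n = Jn p hp I m := hn m h
        show r ∈ Jn p hp I n
        rw [hEq]; exact hm
    · intro hr
      exact ⟨n, hr⟩
  refine ⟨n, le_antisymm ?_ ?_⟩
  · rw [hset]
    refine Ideal.span_le.mpr ?_
    rintro x ⟨a, ha, rfl⟩
    exact ha
  · exact Ideal.span_mono (Set.image_mono (fun r hr => ⟨n, aux_pow_mem p _ n (Ideal.subset_span hr)⟩))
end

section
/- Let R be an Artinian commutative ring of prime characteristic p, and let Q₁ be a power of p such that (√0)^[Q₁] = 0, where √0 is the nilradical. Then for every ideal 𝔟 of R, (𝔟^F)^[Q₁] = 𝔟^[Q₁]. -/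
namespace IsArtinianRing

variable {R : Type*} [CommRing R] [IsArtinianRing R]

theorem isRadical_of_nilradical_le {I : Ideal R} (hI : nilradical R ≤ I) : I.IsRadical := by
  have : IsReduced (R ⧸ nilradical R) :=
    (Ideal.isRadical_iff_quotient_reduced _).mp (Ideal.radical_isRadical ⊥)
  have := isSemisimpleRing_of_isReduced (R ⧸ nilradical R)
  have := (Ideal.Quotient.factor hI).isSemisimpleRing_of_surjective
    (Ideal.Quotient.factor_surjective hI)
  exact (Ideal.isRadical_iff_quotient_reduced I).mpr inferInstance

theorem radical_eq_sup_nilradical (I : Ideal R) : I.radical = I ⊔ nilradical R :=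
  le_antisymm ((isRadical_of_nilradical_le le_sup_right).radical_le_iff.mpr le_sup_left)
    (sup_le I.le_radical (Ideal.radical_mono bot_le))

end IsArtinianRing

section FrobeniusPower

variable {R : Type*} [CommRing R]

theorem frobPow_mono {S T : Set R} (hST : S ⊆ T) (q : ℕ) : frobPow S q ≤ frobPow T q :=
  Ideal.span_mono (Set.image_mono hST)

theorem frobPow_le_self (I : Ideal R) {q : ℕ} (hq : q ≠ 0) : frobPow (I : Set R) q ≤ I :=
  Ideal.span_le.mpr <| Set.image_subset_iff.mpr fun _ hr => I.pow_mem_of_mem hr q hq.bot_lt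

theorem frobPow_sup_le (p : ℕ) [ExpChar R p] (I J : Ideal R) (e : ℕ) :
    frobPow ↑(I ⊔ J) (p ^ e) ≤ frobPow (I : Set R) (p ^ e) ⊔ frobPow (J : Set R) (p ^ e) := by
  refine Ideal.span_le.mpr <| Set.image_subset_iff.mpr fun r hr => ?_
  obtain ⟨i, hi, j, hj, rfl⟩ := Submodule.mem_sup.mp hr
  rw [Set.mem_preimage, add_pow_expChar_pow]
  exact Submodule.add_mem_sup (Ideal.subset_span ⟨i, hi, rfl⟩) (Ideal.subset_span ⟨j, hj, rfl⟩)

theorem subset_frobClosure (p : ℕ) (I : Ideal R) : (I : Set R) ⊆ frobClosure p I :=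
  fun r hr => ⟨0, by
    rw [pow_zero, pow_one]
    exact Ideal.subset_span ⟨r, hr, pow_one r⟩⟩

theorem frobClosure_subset_radical {p : ℕ} (hp : p ≠ 0) (I : Ideal R) :
    frobClosure p I ⊆ I.radical :=
  fun _ ⟨n, hn⟩ => ⟨p ^ n, frobPow_le_self I (pow_ne_zero n hp) hn⟩

end FrobeniusPower

/-- in an Artinian ring of characteristic `p`, if `Q₁ = p^{e₁}` satisfies
`(√0)^{[Q₁]} = 0`, then `(𝔟^F)^{[Q₁]} = 𝔟^{[Q₁]}` for every ideal `𝔟`. -/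
theorem artinian_uniform_frobenius_closure {R : Type*} [CommRing R] [IsArtinianRing R]
    (p : ℕ) (hp : p.Prime) [CharP R p] (e₁ : ℕ)
    (h : frobPow (nilradical R : Set R) (p ^ e₁) = ⊥) (𝔟 : Ideal R) :
    frobPow (frobClosure p 𝔟) (p ^ e₁) = frobPow (𝔟 : Set R) (p ^ e₁) := by
  have : ExpChar R p := .prime hp
  refine le_antisymm ?_ (frobPow_mono (subset_frobClosure p 𝔟) _)
  calc frobPow (frobClosure p 𝔟) (p ^ e₁)
      ≤ frobPow ↑(𝔟 ⊔ nilradical R) (p ^ e₁) := by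
        rw [← IsArtinianRing.radical_eq_sup_nilradical]
        exact frobPow_mono (frobClosure_subset_radical hp.ne_zero 𝔟) _
    _ ≤ frobPow (𝔟 : Set R) (p ^ e₁) ⊔ frobPow (nilradical R : Set R) (p ^ e₁) :=
        frobPow_sup_le p _ _ e₁
    _ = frobPow (𝔟 : Set R) (p ^ e₁) := by rw [h, sup_bot_eq]
end

section
/- Let R be a commutative ring, and let x₁,…,x_l ∈ R be a d-sequence, i.e. ((Σ_{i=1}^j x_i R) : x_{j+1} x_k) = ((Σ_{i=1}^j x_i R) : x_k) for all 0 ≤ j < k ≤ l. Then for every r with 0 ≤ r ≤ l−1, ((Σ_{i=1}^r x_i R) : x_{r+1}) ∩ (Σ_{i=1}^l x_i R) = Σ_{i=1}^r x_i R. -/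
/-- `x₁, …, x_l` is a d-sequence: `((x₁,…,x_j) : x_{j+1} x_k) = ((x₁,…,x_j) : x_k)`
for all `0 ≤ j < k ≤ l`.  Here `x` is `0`-indexed: `x j` plays the role of `x_{j+1}`,
and the condition is stated for `j ≤ k` (`0`-based). -/
def IsDSeq {R : Type*} [CommRing R] {l : ℕ} (x : Fin l → R) : Prop :=
  ∀ j k : Fin l, j ≤ k →
    (Ideal.span (x '' {i | i < j})).colon (Ideal.span {x j * x k}) =
      (Ideal.span (x '' {i | i < j})).colon (Ideal.span {x k})

/-- `x₁, …, x_l` is an unconditioned strong d-sequence: `x₁^{n₁}, …, x_l^{n_l}` is a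
d-sequence in any order, for all positive integers `n₁, …, n_l`. -/
def IsUSD {R : Type*} [CommRing R] {l : ℕ} (x : Fin l → R) : Prop :=
  ∀ n : Fin l → ℕ, (∀ i, 0 < n i) → ∀ σ : Equiv.Perm (Fin l),
    IsDSeq (fun i => x (σ i) ^ n (σ i))

/-- Huneke: for a d-sequence `x₁,…,x_l` and `0 ≤ r ≤ l-1`,
`((x₁,…,x_r) : x_{r+1}) ∩ (x₁,…,x_l) = (x₁,…,x_r)`. -/
theorem dseq_colon_inter {R : Type*} [CommRing R] {l : ℕ} (x : Fin l → R)
    (hx : IsDSeq x) (r : Fin l) :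
    (Ideal.span (x '' {i | i < r})).colon (Ideal.span {x r}) ⊓ Ideal.span (Set.range x) =
      Ideal.span (x '' {i | i < r}) := by
  set Jr : Ideal R := Ideal.span (x '' {i | i < r}) with hJr
  -- the truncated ideals, indexed by ℕ
  set J : ℕ → Ideal R := fun m => Ideal.span (x '' {i | (i : ℕ) < m}) with hJ
  have hJrJ : Jr = J (r : ℕ) := rfl
  have key : ∀ m : ℕ, (r : ℕ) ≤ m → m ≤ l →
      Jr.colon (Ideal.span {x r}) ⊓ J m ≤ Jr := by
    intro m hm
    induction m, hm using Nat.le_induction with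
    | base =>
      intro _
      rw [hJrJ]
      exact inf_le_right
    | succ m hrm ih =>
      intro hml
      have hml' : m < l := hml
      have hml'' : m ≤ l := le_of_lt hml'
      set M : Fin l := ⟨m, hml'⟩ with hM
      have hsplit : J (m + 1) = J m ⊔ Ideal.span {x M} := by
        show Ideal.span (x '' {i | (i : ℕ) < m + 1}) =
          Ideal.span (x '' {i | (i : ℕ) < m}) ⊔ Ideal.span {x M}
        have hset : {i : Fin l | (i : ℕ) < m + 1} = {i : Fin l | (i : ℕ) < m} ∪ {M} := by
          ext i
          simp only [Set.mem_setOf_eq, Set.mem_union, Set.mem_singleton_iff, Fin.ext_iff, hM]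
          omega
        rw [hset, Set.image_union, Set.image_singleton, Ideal.span_union]
      have hJrJm : Jr ≤ J m := by
        apply Ideal.span_mono
        apply Set.image_mono
        intro i hi
        exact lt_of_lt_of_le hi hrm
      intro z hz
      obtain ⟨hz1, hz2⟩ := hz
      rw [hsplit] at hz2
      obtain ⟨b, hb, w, hw, rfl⟩ := Submodule.mem_sup.1 hz2
      obtain ⟨c, rfl⟩ := Ideal.mem_span_singleton'.1 hw
      set z := b + c * x M with hzdef
      -- z * x M ∈ Jr
      have hzr : z * x r ∈ Jr := Ideal.mem_colon_span_singleton.1 hz1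
      have hrM : r ≤ M := hrm
      have hzM : z * x M ∈ Jr := by
        have h1 : z ∈ Jr.colon (Ideal.span {x r * x M}) := by
          rw [Ideal.mem_colon_span_singleton, ← mul_assoc]
          exact Ideal.mul_mem_right _ _ hzr
        rw [hJr] at h1
        rw [hx r M hrM] at h1
        rw [← hJr] at h1
        exact Ideal.mem_colon_span_singleton.1 h1
      -- hence c * (x M * x M) ∈ J m
      have hcMM : c * (x M * x M) ∈ J m := by
        have h2 : z * x M - b * x M ∈ J m :=
          Submodule.sub_mem _ (hJrJm hzM) (Ideal.mul_mem_right _ _ hb)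
        have h3 : z * x M - b * x M = c * (x M * x M) := by
          rw [hzdef]; ring
        rwa [h3] at h2
      -- use the d-sequence property at (M, M)
      have hJmM : J m = Ideal.span (x '' {i | i < M}) := rfl
      have hcM : c * x M ∈ J m := by
        have h4 : c ∈ (J m).colon (Ideal.span {x M * x M}) :=
          Ideal.mem_colon_span_singleton.2 hcMM
        rw [hJmM] at h4
        rw [hx M M le_rfl] at h4
        rw [← hJmM] at h4
        exact Ideal.mem_colon_span_singleton.1 h4
      have hzJm : z ∈ J m := Submodule.add_mem _ hb hcM
      exact ih hml'' ⟨hz1, hzJm⟩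
  have hrange : Ideal.span (Set.range x) = J l := by
    show _ = Ideal.span (x '' {i : Fin l | (i : ℕ) < l})
    congr 1
    rw [← Set.image_univ]
    congr 1
    ext i
    simpa using i.isLt
  apply le_antisymm
  · rw [hrange]
    exact key l r.isLt.le le_rfl
  · apply le_inf
    · intro z hz
      exact Ideal.mem_colon_span_singleton.2 (Ideal.mul_mem_right _ _ hz)
    · exact Ideal.span_mono (Set.image_subset_range x _)
end

section
/- Let R be a commutative ring and x₁,…,x_l an unconditioned strong d-sequence in R (i.e. x₁^{n₁},…,x_l^{n_l} forms a d-sequence in every order for all positive integers n₁,…,n_l). Then for all positive integers n₁,…,n_l, every proper subset Λ ⊊ {1,…,l}, and every j ∈ {1,…,l} ∖ Λ: ((Σ_{i∈Λ} x_i^{n_i} R) : x_j^{n_j}) = ((Σ_{i∈Λ} x_i^{n_i} R) : x_j) = ((Σ_{i∈Λ} x_i^{n_i} R) : Σ_{i∉Λ} x_i R). -/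
open Equiv

theorem Fin.exists_perm_image_lt_eq {l : ℕ} {Λ : Set (Fin l)} {j : Fin l} (hj : j ∉ Λ) :
    ∃ (σ : Perm (Fin l)) (p : Fin l), σ '' {i | i < p} = Λ ∧ σ p = j := by
  classical
  let p : Fin l := ⟨Fintype.card Λ, by simpa using Fintype.card_subtype_lt hj⟩
  have hcard : Fintype.card {i // i < p} = Fintype.card Λ := by
    rw [Fintype.card_subtype, Finset.filter_gt_eq_Iio, Fin.card_Iio]
  let e : {i // i < p} ≃ {i // i ∈ Λ} := Fintype.equivOfCardEq hcard
  let σ₀ : Perm (Fin l) := e.extendSubtype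
  have himage₀ : σ₀ '' {i | i < p} = Λ := by
    ext a
    refine ⟨fun ⟨i, hi, hia⟩ => hia ▸ e.extendSubtype_mem i hi, fun ha => ?_⟩
    refine ⟨e.symm ⟨a, ha⟩, (e.symm ⟨a, ha⟩).2, ?_⟩
    rw [e.extendSubtype_apply_of_mem _ (e.symm ⟨a, ha⟩).2]
    simp
  have hfix : ∀ i ∈ {i | i < p}, swap (σ₀ p) j (σ₀ i) = σ₀ i := fun i hi =>
    swap_apply_of_ne_of_ne (σ₀.injective.ne (ne_of_lt hi))
      fun h => hj (h ▸ e.extendSubtype_mem i hi)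
  refine ⟨σ₀.trans (swap (σ₀ p) j), p, ?_, swap_apply_left _ _⟩
  rw [← himage₀, ← Set.image_congr hfix]
  rfl

theorem Ideal.colon_span_pow_eq_of_colon_span_pow_two_mul {R : Type*} [CommSemiring R]
    {I : Ideal R} {y : R}
    (h : ∀ t, 0 < t → I.colon (Ideal.span {y ^ (2 * t)}) = I.colon (Ideal.span {y ^ t}))
    {t : ℕ} (ht : 0 < t) :
    I.colon (Ideal.span {y ^ t}) = I.colon (Ideal.span {y}) := by
  have hmono : Monotone fun a => I.colon (Ideal.span {y ^ a}) := fun a b hab r hr => by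
    rw [Ideal.mem_colon_span_singleton] at hr ⊢
    rw [← Nat.add_sub_cancel' hab, pow_add, ← mul_assoc]
    exact I.mul_mem_right _ hr
  have htwo_pow : ∀ e, I.colon (Ideal.span {y ^ 2 ^ e}) = I.colon (Ideal.span {y}) := by
    intro e
    induction e with
    | zero => rw [pow_zero, pow_one]
    | succ e ih => rw [pow_succ', h _ (Nat.two_pow_pos e), ih]
  refine le_antisymm ((hmono Nat.lt_two_pow_self.le).trans (htwo_pow t).le) ?_
  simpa using hmono ht

theorem IsUSD.colon_pow_mul_pow_eq {R : Type*} [CommRing R] {l : ℕ} {x : Fin l → R}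
    (hx : IsUSD x) {n : Fin l → ℕ} {Λ : Set (Fin l)} (hn : ∀ i ∈ Λ, 0 < n i)
    {t : ℕ} (ht : 0 < t) {j k : Fin l} (hj : j ∉ Λ) (hk : k ∉ Λ) :
    (Ideal.span ((fun i => x i ^ n i) '' Λ)).colon (Ideal.span {x j ^ t * x k ^ t}) =
      (Ideal.span ((fun i => x i ^ n i) '' Λ)).colon (Ideal.span {x k ^ t}) := by
  classical
  obtain ⟨σ, p, hσΛ, hσp⟩ := Fin.exists_perm_image_lt_eq hj
  let m : Fin l → ℕ := fun i => if i ∈ Λ then n i else t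
  have hm : ∀ i, 0 < m i := fun i => by
    by_cases hi : i ∈ Λ <;> simp [m, hi, hn, ht]
  have hpk : p ≤ σ.symm k := not_lt.mp fun hlt =>
    hk (hσΛ ▸ ⟨σ.symm k, hlt, σ.apply_symm_apply k⟩)
  have himage : (fun i => x (σ i) ^ m (σ i)) '' {i | i < p} = (fun i => x i ^ n i) '' Λ := by
    rw [show (fun i => x (σ i) ^ m (σ i)) = (fun i => x i ^ m i) ∘ σ from rfl,
      Set.image_comp, hσΛ]
    exact Set.image_congr fun i hi => by simp [m, hi]
  have hd := hx m hm σ p (σ.symm k) hpk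
  simpa only [himage, hσp, σ.apply_symm_apply, m, if_neg hj, if_neg hk] using hd

theorem usd_unmixed_colon_general {R : Type*} [CommRing R] {l : ℕ} (x : Fin l → R)
    (hx : IsUSD x) (n : Fin l → ℕ) (hn : ∀ i, 0 < n i)
    (Λ : Set (Fin l)) (j : Fin l) (hj : j ∉ Λ) :
    (Ideal.span ((fun i => x i ^ n i) '' Λ)).colon (Ideal.span {x j ^ n j}) =
        (Ideal.span ((fun i => x i ^ n i) '' Λ)).colon (Ideal.span {x j}) ∧
      (Ideal.span ((fun i => x i ^ n i) '' Λ)).colon (Ideal.span {x j}) =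
        (Ideal.span ((fun i => x i ^ n i) '' Λ)).colon (Ideal.span (x '' Λᶜ)) := by
  set I := Ideal.span ((fun i => x i ^ n i) '' Λ)
  have hnΛ : ∀ i ∈ Λ, 0 < n i := fun i _ => hn i
  refine ⟨I.colon_span_pow_eq_of_colon_span_pow_two_mul (fun t ht => ?_) (hn j),
    le_antisymm (fun r hr => ?_) ?_⟩
  · rw [two_mul, pow_add]
    exact hx.colon_pow_mul_pow_eq hnΛ ht hj hj
  · rw [Ideal.colon_span, Submodule.mem_colon]
    rintro _ ⟨k, hk, rfl⟩
    have hjk := hx.colon_pow_mul_pow_eq hnΛ one_pos hj hk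
    simp only [pow_one] at hjk
    rw [smul_eq_mul, ← Ideal.mem_colon_span_singleton, ← hjk, Ideal.mem_colon_span_singleton,
      ← mul_assoc]
    exact I.mul_mem_right _ (Ideal.mem_colon_span_singleton.mp hr)
  · exact Submodule.colon_mono le_rfl
      (Ideal.span_mono (Set.singleton_subset_iff.mpr ⟨j, hj, rfl⟩))

/-- Goto–Yamagishi: for an unconditioned strong d-sequence `x₁,…,x_l`,
positive integers `n₁,…,n_l`, a proper subset `Λ ⊊ {1,…,l}` and `j ∉ Λ`,
`((Σ_{i∈Λ} x_i^{n_i}) : x_j^{n_j}) = ((Σ_{i∈Λ} x_i^{n_i}) : x_j)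
  = ((Σ_{i∈Λ} x_i^{n_i}) : Σ_{i∉Λ} x_i)`. -/
theorem usd_unmixed_colon {R : Type*} [CommRing R] {l : ℕ} (x : Fin l → R)
    (hx : IsUSD x) (n : Fin l → ℕ) (hn : ∀ i, 0 < n i)
    (Λ : Set (Fin l)) (hΛ : Λ ≠ Set.univ) (j : Fin l) (hj : j ∉ Λ) :
    (Ideal.span ((fun i => x i ^ n i) '' Λ)).colon (Ideal.span {x j ^ n j}) =
        (Ideal.span ((fun i => x i ^ n i) '' Λ)).colon (Ideal.span {x j}) ∧
      (Ideal.span ((fun i => x i ^ n i) '' Λ)).colon (Ideal.span {x j}) =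
        (Ideal.span ((fun i => x i ^ n i) '' Λ)).colon (Ideal.span (x '' Λᶜ)) :=
  usd_unmixed_colon_general x hx n hn Λ j hj
end

section
/- Let R be a commutative ring and x₁,…,x_l an unconditioned strong d-sequence. Then for all positive integers n₁,…,n_l and every proper subset Λ ⊊ {1,…,l}: (Σ_{i∈Λ} x_i^{n_i} R)^un ∩ (Σ_{i=1}^l x_i^{n_i} R) = Σ_{i∈Λ} x_i^{n_i} R, where (Σ_{i∈Λ} x_i^{n_i} R)^un := ((Σ_{i∈Λ} x_i^{n_i} R) : Σ_{i∉Λ} x_i R). -/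
section Aux

variable {R : Type*} [CommRing R] {l : ℕ}

/-- Monotonicity of colon ideals in powers. -/
lemma aux_colon_pow_mono (I : Ideal R) (y : R) {s t : ℕ} (h : s ≤ t) :
    I.colon (Ideal.span {y ^ s}) ≤ I.colon (Ideal.span {y ^ t}) := by
  intro a ha
  rw [Ideal.mem_colon_span_singleton] at ha ⊢
  have : a * y ^ t = (a * y ^ s) * y ^ (t - s) := by
    rw [mul_assoc, ← pow_add, Nat.add_sub_cancel' h]
  rw [this]
  exact Ideal.mul_mem_right _ _ ha

/-- A permutation of `Fin l` putting a prescribed set `T` first and a prescribed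
element `j ∉ T` immediately after. -/
lemma aux_exists_perm (T : Set (Fin l)) (j : Fin l) (hj : j ∉ T) :
    ∃ (σ : Equiv.Perm (Fin l)) (m : Fin l),
      σ '' {i | i < m} = T ∧ σ m = j := by
  classical
  set S : Finset (Fin l) := (Set.toFinite T).toFinset with hS
  have hST : (S : Set (Fin l)) = T := Set.Finite.coe_toFinset _
  have hjS : j ∉ S := by simp only [hS, Set.Finite.mem_toFinset]; exact hj
  have hm : S.card < l := by
    have : S ≠ Finset.univ := by
      intro h
      exact hjS (h ▸ Finset.mem_univ j)
    simpa using (Finset.card_lt_iff_ne_univ S).mpr this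
  set m : Fin l := ⟨S.card, hm⟩ with hmdef
  have e1 : {i : Fin l // i < m} ≃ Fin S.card :=
    { toFun := fun i => ⟨i.1.1, i.2⟩
      invFun := fun k => ⟨⟨k.1, lt_trans k.2 hm⟩, k.2⟩
      left_inv := fun i => by ext; rfl
      right_inv := fun k => by ext; rfl }
  have hcard : Fintype.card {i : Fin l // i < m} = Fintype.card {i : Fin l // i ∈ S} := by
    rw [Fintype.card_congr e1]
    simp [Fintype.card_coe]
  set e : {i : Fin l // i < m} ≃ {i : Fin l // i ∈ S} := Fintype.equivOfCardEq hcard with he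
  set σ₀ : Equiv.Perm (Fin l) := e.extendSubtype with hσ₀
  have hσ₀S : σ₀ '' {i | i < m} = (S : Set (Fin l)) := by
    apply Set.Subset.antisymm
    · rintro _ ⟨i, hi, rfl⟩
      exact e.extendSubtype_mem i hi
    · rintro s hs
      refine ⟨e.symm ⟨s, hs⟩, (e.symm ⟨s, hs⟩).2, ?_⟩
      rw [e.extendSubtype_apply_of_mem _ (e.symm ⟨s, hs⟩).2]
      simp
  have hj' : σ₀ m ∉ S := e.extendSubtype_not_mem m (lt_irrefl m)
  refine ⟨σ₀.trans (Equiv.swap j (σ₀ m)), m, ?_, ?_⟩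
  · have : ∀ s ∈ (S : Set (Fin l)), Equiv.swap j (σ₀ m) s = s := by
      intro s hs
      exact Equiv.swap_apply_of_ne_of_ne (fun h => hjS (h ▸ hs)) (fun h => hj' (h ▸ hs))
    calc (σ₀.trans (Equiv.swap j (σ₀ m))) '' {i | i < m}
        = Equiv.swap j (σ₀ m) '' (σ₀ '' {i | i < m}) := by
          rw [Set.image_image]; rfl
      _ = Equiv.swap j (σ₀ m) '' (S : Set (Fin l)) := by rw [hσ₀S]
      _ = (S : Set (Fin l)) := by
          rw [Set.image_congr this, Set.image_id']
      _ = T := hST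
  · simp [Equiv.swap_apply_right]

/-- Doubling the exponent does not change the colon ideal. -/
lemma aux_colon_two_mul (x : Fin l → R) (hx : IsUSD x) (T : Set (Fin l)) (j : Fin l)
    (hj : j ∉ T) (e : Fin l → ℕ) (he : ∀ i, 0 < e i) (r : ℕ) (hr : 0 < r) :
    (Ideal.span ((fun i => x i ^ e i) '' T)).colon (Ideal.span {x j ^ (2 * r)}) =
      (Ideal.span ((fun i => x i ^ e i) '' T)).colon (Ideal.span {x j ^ r}) := by
  classical
  obtain ⟨σ, m, hσT, hσm⟩ := aux_exists_perm T j hj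
  set n' : Fin l → ℕ := fun t => if t ∈ T then e t else if t = j then r else 1 with hn'def
  have hn' : ∀ i, 0 < n' i := by
    intro i
    simp only [hn'def]
    split
    · exact he i
    · split
      · exact hr
      · exact one_pos
  have hd := hx n' hn' σ m m le_rfl
  have himg : (fun i => x (σ i) ^ n' (σ i)) '' {i | i < m}
      = (fun i => x i ^ e i) '' T := by
    have h1 : (fun i => x (σ i) ^ n' (σ i)) '' {i | i < m}
        = (fun t => x t ^ n' t) '' (σ '' {i | i < m}) := by
      rw [Set.image_image]
    rw [h1, hσT]
    apply Set.image_congr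
    intro t ht
    simp [hn'def, ht]
  have hnj : n' j = r := by simp [hn'def, hj]
  have hpow : x (σ m) ^ n' (σ m) * x (σ m) ^ n' (σ m) = x j ^ (2 * r) := by
    rw [hσm, hnj, ← pow_add, two_mul]
  have hpow1 : x (σ m) ^ n' (σ m) = x j ^ r := by rw [hσm, hnj]
  simp only [himg, hpow1] at hd
  rw [show 2 * r = r + r by ring, pow_add]
  exact hd

/-- All positive powers give the same colon ideal. -/
lemma aux_colon_pow_eq (x : Fin l → R) (hx : IsUSD x) (T : Set (Fin l)) (j : Fin l)
    (hj : j ∉ T) (e : Fin l → ℕ) (he : ∀ i, 0 < e i) (r : ℕ) (hr : 0 < r) :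
    (Ideal.span ((fun i => x i ^ e i) '' T)).colon (Ideal.span {x j ^ r}) =
      (Ideal.span ((fun i => x i ^ e i) '' T)).colon (Ideal.span {x j}) := by
  induction r with
  | zero => omega
  | succ r ih =>
    rcases Nat.eq_zero_or_pos r with h0 | h1
    · subst h0; rw [pow_one]
    · have ihe := ih h1
      apply le_antisymm
      · calc (Ideal.span ((fun i => x i ^ e i) '' T)).colon (Ideal.span {x j ^ (r + 1)})
            ≤ (Ideal.span ((fun i => x i ^ e i) '' T)).colon (Ideal.span {x j ^ (2 * r)}) :=
              aux_colon_pow_mono _ _ (by omega)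
          _ = (Ideal.span ((fun i => x i ^ e i) '' T)).colon (Ideal.span {x j ^ r}) :=
              aux_colon_two_mul x hx T j hj e he r h1
          _ = (Ideal.span ((fun i => x i ^ e i) '' T)).colon (Ideal.span {x j}) := ihe
      · have := aux_colon_pow_mono (Ideal.span ((fun i => x i ^ e i) '' T)) (x j)
          (show 1 ≤ r + 1 by omega)
        rwa [pow_one] at this

/-- The key induction: if `a` lies in the ideal generated by the powers over `Λ ∪ S`
and `x i * a` lies in the ideal generated by the powers over `Λ` for every `i ∉ Λ`,
then `a` already lies in the latter ideal. -/
lemma aux_key (x : Fin l → R) (hx : IsUSD x) (n : Fin l → ℕ) (hn : ∀ i, 0 < n i)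
    (Λ : Set (Fin l)) (S : Finset (Fin l)) :
    ∀ a : R, a ∈ Ideal.span ((fun i => x i ^ n i) '' (Λ ∪ ↑S)) →
      (∀ i, i ∉ Λ → x i * a ∈ Ideal.span ((fun i => x i ^ n i) '' Λ)) →
      a ∈ Ideal.span ((fun i => x i ^ n i) '' Λ) := by
  classical
  induction S using Finset.induction_on with
  | empty => intro a ha _; simpa using ha
  | @insert j S hjS ih =>
    intro a ha hcol
    by_cases hjΛ : j ∈ Λ
    · apply ih a ?_ hcol
      have : Λ ∪ ↑(insert j S) = Λ ∪ ↑S := by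
        rw [Finset.coe_insert, Set.union_insert, Set.insert_eq_self.mpr (Set.mem_union_left _ hjΛ)]
      rwa [this] at ha
    · set J : Ideal R := Ideal.span ((fun i => x i ^ n i) '' Λ) with hJ
      set J' : Ideal R := Ideal.span ((fun i => x i ^ n i) '' (Λ ∪ ↑S)) with hJ'
      have hset : Λ ∪ ↑(insert j S) = insert j (Λ ∪ ↑S) := by
        rw [Finset.coe_insert, Set.union_insert]
      rw [hset, Set.image_insert_eq, Ideal.mem_span_insert] at ha
      obtain ⟨c, b, hb, rfl⟩ := ha
      have hJJ' : J ≤ J' := Ideal.span_mono (Set.image_mono Set.subset_union_left)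
      have hja : x j * (c * x j ^ n j + b) ∈ J' := hJJ' (hcol j hjΛ)
      have h1 : c * x j ^ (n j + 1) ∈ J' := by
        have hb' : x j * b ∈ J' := Ideal.mul_mem_left _ _ hb
        have h := J'.sub_mem hja hb'
        have heq : x j * (c * x j ^ n j + b) - x j * b = c * x j ^ (n j + 1) := by ring
        rwa [heq] at h
      have hjT : j ∉ Λ ∪ ↑S := by
        intro h
        rcases h with h | h
        · exact hjΛ h
        · exact hjS h
      have h2 : c ∈ J'.colon (Ideal.span {x j}) := by
        rw [← aux_colon_pow_eq x hx (Λ ∪ ↑S) j hjT n hn (n j + 1) (by omega)]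
        rw [Ideal.mem_colon_span_singleton]
        exact h1
      have hcx : c * x j ∈ J' := Ideal.mem_colon_span_singleton.mp h2
      have h3 : c * x j ^ n j ∈ J' := by
        have heq : c * x j ^ n j = x j ^ (n j - 1) * (c * x j) := by
          rw [← mul_assoc, mul_comm (x j ^ (n j - 1)) c, mul_assoc, ← pow_succ]
          congr 2
          have := hn j
          omega
        rw [heq]
        exact Ideal.mul_mem_left _ _ hcx
      exact ih _ (J'.add_mem h3 hb) hcol

end Aux

/-- for an unconditioned strong d-sequence `x₁,…,x_l`, positive integers
`n₁,…,n_l` and a proper subset `Λ ⊊ {1,…,l}`,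
`(Σ_{i∈Λ} x_i^{n_i})^un ∩ (Σ_{i=1}^l x_i^{n_i}) = Σ_{i∈Λ} x_i^{n_i}`, where
`I^un = (I : Σ_{i∉Λ} x_i)`. -/
theorem usd_unmixed_inter {R : Type*} [CommRing R] {l : ℕ} (x : Fin l → R)
    (hx : IsUSD x) (n : Fin l → ℕ) (hn : ∀ i, 0 < n i)
    (Λ : Set (Fin l)) (hΛ : Λ ≠ Set.univ) :
    (Ideal.span ((fun i => x i ^ n i) '' Λ)).colon (Ideal.span (x '' Λᶜ)) ⊓
        Ideal.span (Set.range fun i => x i ^ n i) =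
      Ideal.span ((fun i => x i ^ n i) '' Λ) := by
  classical
  apply le_antisymm
  · rintro a ha
    rw [Submodule.mem_inf] at ha
    obtain ⟨hcol, hI⟩ := ha
    apply aux_key x hx n hn Λ Finset.univ a
    · have : Λ ∪ ↑(Finset.univ : Finset (Fin l)) = Set.univ := by simp
      rw [this, Set.image_univ]
      exact hI
    · intro i hi
      have hxi : x i ∈ Ideal.span (x '' Λᶜ) := Ideal.subset_span ⟨i, hi, rfl⟩
      have := Submodule.mem_colon.mp hcol (x i) hxi
      rwa [smul_eq_mul, mul_comm] at this
  · refine le_inf ?_ ?_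
    · intro a ha
      rw [Submodule.mem_colon]
      intro p hp
      rw [smul_eq_mul]
      exact Ideal.mul_mem_right _ _ ha
    · apply Ideal.span_mono
      rintro _ ⟨i, _, rfl⟩
      exact ⟨i, rfl⟩
end

section
/- Let R be a commutative ring and x ∈ R. If x forms an unconditioned strong d-sequence of length one (equivalently, (0 : x²) = (0 : x)), then for every positive integer n, the ideal (x^n R)^lim := ⋃_{j≥0} ((x^{n+j} R) : x^j) equals x^n R + (0 : x). -/
/-- if `x` is a d-sequence of length one, i.e. `(0 : x²) = (0 : x)`,
then for every `n ≥ 1`, `(x^n R)^lim = ⋃_{j≥0} ((x^{n+j} R) : x^j) = x^n R + (0 : x)`. -/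
theorem usd_length_one_lim {R : Type*} [CommRing R] (x : R)
    (hx : (⊥ : Ideal R).colon (Ideal.span {x * x}) = (⊥ : Ideal R).colon (Ideal.span {x}))
    (n : ℕ) (hn : 0 < n) :
    (⨆ j : ℕ, (Ideal.span {x ^ (n + j)}).colon (Ideal.span {x ^ j})) =
      Ideal.span {x ^ n} + (⊥ : Ideal R).colon (Ideal.span {x}) := by
  have key : ∀ a : R, a * (x * x) = 0 → a * x = 0 := by
    intro a ha
    have h1 : a ∈ (⊥ : Ideal R).colon (Ideal.span {x * x}) := by
      rw [Ideal.mem_colon_span_singleton]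
      simpa using ha
    rw [hx, Ideal.mem_colon_span_singleton] at h1
    simpa using h1
  have ann : ∀ m : ℕ, ∀ a : R, a * x ^ (m + 1) = 0 → a * x = 0 := by
    intro m
    induction m with
    | zero => intro a h; simpa using h
    | succ k ih =>
      intro a h
      apply ih
      have : (a * x ^ k) * (x * x) = 0 := by
        rw [← h]; ring
      have h2 := key _ this
      rw [← h2]; ring
  apply le_antisymm
  · apply iSup_le
    intro j a ha
    rw [Ideal.mem_colon_span_singleton, Ideal.mem_span_singleton] at ha
    obtain ⟨b, hb⟩ := ha
    cases j with
    | zero =>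
      apply Ideal.mem_sup_left
      rw [Ideal.mem_span_singleton]
      exact ⟨b, by simpa using hb⟩
    | succ k =>
      have hz : (a - x ^ n * b) * x ^ (k + 1) = 0 := by
        have : a * x ^ (k + 1) = x ^ (n + (k + 1)) * b := hb
        rw [sub_mul, this, pow_add]; ring
      have hz1 : (a - x ^ n * b) * x = 0 := ann _ _ hz
      have : a = x ^ n * b + (a - x ^ n * b) := by ring
      rw [this]
      apply Submodule.add_mem_sup
      · rw [Ideal.mem_span_singleton]; exact ⟨b, rfl⟩
      · rw [Ideal.mem_colon_span_singleton]; simpa using hz1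
  · rw [Ideal.add_eq_sup]
    apply sup_le
    · refine le_trans ?_ (le_iSup _ 0)
      intro a ha
      rw [Ideal.mem_colon_span_singleton]
      simpa using ha
    · refine le_trans ?_ (le_iSup _ 1)
      intro a ha
      rw [Ideal.mem_colon_span_singleton] at ha ⊢
      have : a * x = 0 := by simpa using ha
      simp [pow_one, this]
end

section
/- Let R be a commutative ring and x₁,…,x_l an unconditioned strong d-sequence with l ≥ 1. Then for all positive integers n₁,…,n_l: (x₁⋯x_l)·(Σ_{i=1}^l x_i^{n_i} R)^lim ⊆ Σ_{i=1}^l x_i^{n_i+1} R. -/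
section Aux

variable {R : Type*} [CommRing R] {l : ℕ}

/-- Multiplying an element of `(x₁^{m₁},…,x_l^{m_l})` by `x₁⋯x_l` lands in
`(x₁^{m₁+1},…,x_l^{m_l+1})`. -/
private lemma prod_mul_mem (x : Fin l → R) (m : Fin l → ℕ) {z : R}
    (hz : z ∈ Ideal.span (Set.range fun i => x i ^ m i)) :
    (∏ i, x i) * z ∈ Ideal.span (Set.range fun i => x i ^ (m i + 1)) := by
  obtain ⟨c, hc⟩ := (Submodule.mem_span_range_iff_exists_fun R).1 hz
  rw [← hc, Finset.mul_sum]
  refine Ideal.sum_mem _ fun i _ => ?_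
  have h1 : (∏ k, x k) * (c i • x i ^ m i)
      = (c i * ∏ k ∈ Finset.univ.erase i, x k) * x i ^ (m i + 1) := by
    rw [← Finset.mul_prod_erase Finset.univ x (Finset.mem_univ i), smul_eq_mul]
    ring
  rw [h1]
  exact Ideal.mul_mem_left _ _ (Ideal.subset_span ⟨i, rfl⟩)

/-- Key consequence of the USD property: with `J = (x_i^{m_i} : i ≠ p)`,
if `x_p^a · u ∈ J` for some `a ≥ 1`, then already `x_p · u ∈ J`. -/
private lemma colon_pow (hl : 1 ≤ l) {x : Fin l → R} (hx : IsUSD x)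
    (m : Fin l → ℕ) (hm : ∀ i, 0 < m i) (p : Fin l) :
    ∀ a : ℕ, 0 < a → ∀ u : R,
      x p ^ a * u ∈ Ideal.span ((fun i => x i ^ m i) '' {i | i ≠ p}) →
      x p * u ∈ Ideal.span ((fun i => x i ^ m i) '' {i | i ≠ p}) := by
  set J := Ideal.span ((fun i => x i ^ m i) '' {i | i ≠ p}) with hJ
  have key : ∀ b : ℕ, 0 < b → ∀ u : R, x p ^ (b + b) * u ∈ J → x p ^ b * u ∈ J := by
    intro b hb u hu
    set last : Fin l := ⟨l - 1, by omega⟩ with hlast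
    set n' : Fin l → ℕ := fun i => if i = p then b else m i with hn'
    have hn'pos : ∀ i, 0 < n' i := fun i => by
      by_cases h : i = p <;> simp [hn', h, hb, hm i]
    set σ : Equiv.Perm (Fin l) := Equiv.swap p last with hσ
    have hσlast : σ last = p := Equiv.swap_apply_right p last
    have hσne : ∀ i : Fin l, i ≠ last → σ i ≠ p := by
      intro i hi h
      exact hi (σ.injective (h.trans hσlast.symm))
    have hds := hx n' hn'pos σ last last le_rfl
    have himg : ((fun i => x (σ i) ^ n' (σ i)) '' {i | i < last})
        = (fun i => x i ^ m i) '' {i | i ≠ p} := by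
      have hset : {i : Fin l | i < last} = {i : Fin l | i ≠ last} := by
        ext i
        have h1 : i.1 < l := i.2
        simp only [Set.mem_setOf_eq, Fin.lt_def, ne_eq, Fin.ext_iff, hlast]
        omega
      rw [hset]
      ext z
      simp only [Set.mem_image, Set.mem_setOf_eq]
      constructor
      · rintro ⟨i, hi, rfl⟩
        refine ⟨σ i, hσne i hi, ?_⟩
        simp [hn', hσne i hi]
      · rintro ⟨s, hs, rfl⟩
        refine ⟨σ.symm s, ?_, ?_⟩
        · intro h
          apply hs
          rw [← hσlast, ← h, σ.apply_symm_apply]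
        · rw [σ.apply_symm_apply]
          simp [hn', hs]
    rw [himg] at hds
    have e1 : x (σ last) ^ n' (σ last) = x p ^ b := by
      rw [hσlast]; simp [hn']
    simp only [e1, ← pow_add] at hds
    have h1 : u ∈ J.colon (Ideal.span {x p ^ (b + b)}) :=
      Ideal.mem_colon_span_singleton.2 (by rwa [mul_comm])
    rw [hds] at h1
    have h2 := Ideal.mem_colon_span_singleton.1 h1
    rwa [mul_comm] at h2
  intro a
  induction a using Nat.strong_induction_on with
  | _ a ih =>
    intro ha u hu
    rcases Nat.lt_or_ge a 2 with h2 | h2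
    · have : a = 1 := by omega
      subst this
      rwa [pow_one] at hu
    · have hb : 0 < a - 1 := by omega
      have h3 : x p ^ ((a - 1) + (a - 1)) * u ∈ J := by
        have e2 : (a - 1) + (a - 1) = (a - 2) + a := by omega
        rw [e2, pow_add, mul_assoc]
        exact Ideal.mul_mem_left _ _ hu
      have h4 := key (a - 1) hb u h3
      exact ih (a - 1) (by omega) hb u h4

/-- Descent: if `(∏ x_i^{j_i}) y ∈ (x_i^{n_i+j_i})` with all `j_i ≥ 1`, then
`(∏ x_i) y ∈ (x_i^{n_i+1})`. -/
private lemma descent (hl : 1 ≤ l) {x : Fin l → R} (hx : IsUSD x)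
    (n : Fin l → ℕ) (hn : ∀ i, 0 < n i) :
    ∀ N : ℕ, ∀ j : Fin l → ℕ, (∑ i, j i) ≤ N → (∀ i, 1 ≤ j i) → ∀ y : R,
      (∏ i, x i ^ j i) * y ∈ Ideal.span (Set.range fun i => x i ^ (n i + j i)) →
      (∏ i, x i) * y ∈ Ideal.span (Set.range fun i => x i ^ (n i + 1)) := by
  intro N
  induction N with
  | zero =>
    intro j hN hj y _
    exfalso
    have hne : (Finset.univ : Finset (Fin l)).Nonempty := ⟨⟨0, by omega⟩, Finset.mem_univ _⟩
    have : (0 : ℕ) < ∑ i, j i := Finset.sum_pos (fun i _ => hj i) hne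
    omega
  | succ N ih =>
    intro j hN hj y hy
    by_cases hall : ∀ i, j i = 1
    · have e1 : (∏ i, x i ^ j i) = ∏ i, x i :=
        Finset.prod_congr rfl fun i _ => by rw [hall i, pow_one]
      have e2 : (fun i => x i ^ (n i + j i)) = fun i => x i ^ (n i + 1) :=
        funext fun i => by rw [hall i]
      rw [e1, e2] at hy
      exact hy
    · push_neg at hall
      obtain ⟨p, hp⟩ := hall
      have hp2 : 2 ≤ j p := by have := hj p; omega
      obtain ⟨c, hc⟩ := (Submodule.mem_span_range_iff_exists_fun R).1 hy
      set J := Ideal.span ((fun i => x i ^ (n i + j i)) '' {i | i ≠ p}) with hJdef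
      set u : R := (∏ i ∈ Finset.univ.erase p, x i ^ j i) * y - c p * x p ^ n p with hu
      have h1 : x p ^ j p * u ∈ J := by
        have e : x p ^ j p * u = ∑ i ∈ Finset.univ.erase p, c i • x i ^ (n i + j i) := by
          rw [hu, mul_sub, ← mul_assoc,
            Finset.mul_prod_erase Finset.univ (fun i => x i ^ j i) (Finset.mem_univ p), ← hc]
          have e3 : x p ^ j p * (c p * x p ^ n p) = c p • x p ^ (n p + j p) := by
            rw [smul_eq_mul, pow_add]; ring
          rw [e3, Finset.sum_erase_eq_sub (Finset.mem_univ p)]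
        rw [e]
        refine Ideal.sum_mem _ fun i hi => ?_
        exact Submodule.smul_mem _ _
          (Ideal.subset_span ⟨i, (Finset.mem_erase.1 hi).1, rfl⟩)
      have h2 : x p * u ∈ J :=
        colon_pow hl hx (fun i => n i + j i)
          (fun i => by show 0 < n i + j i; have := hn i; omega) p
          (j p) (by omega) u h1
      have h3 : x p ^ (j p - 1) * u ∈ J := by
        have e4 : j p - 1 = (j p - 2) + 1 := by omega
        rw [e4, pow_succ, mul_assoc]
        exact Ideal.mul_mem_left _ _ h2
      set j' : Fin l → ℕ := Function.update j p (j p - 1) with hj'def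
      have hprod : (∏ i, x i ^ j' i) = x p ^ (j p - 1) * ∏ i ∈ Finset.univ.erase p, x i ^ j i := by
        rw [← Finset.mul_prod_erase Finset.univ (fun i => x i ^ j' i) (Finset.mem_univ p)]
        congr 1
        · rw [hj'def, Function.update_self]
        · exact Finset.prod_congr rfl fun i hi => by
            rw [hj'def, Function.update_of_ne (Finset.mem_erase.1 hi).1]
      have hsub : J ≤ Ideal.span (Set.range fun i => x i ^ (n i + j' i)) := by
        apply Ideal.span_mono
        rintro z ⟨i, hi, rfl⟩
        refine ⟨i, ?_⟩
        show x i ^ (n i + j' i) = x i ^ (n i + j i)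
        rw [hj'def, Function.update_of_ne hi]
      have h4 : (∏ i, x i ^ j' i) * y ∈ Ideal.span (Set.range fun i => x i ^ (n i + j' i)) := by
        have e5 : (∏ i, x i ^ j' i) * y
            = x p ^ (j p - 1) * u + c p * x p ^ (n p + (j p - 1)) := by
          rw [hprod, hu, pow_add]; ring
        rw [e5]
        refine Ideal.add_mem _ (hsub h3) (Ideal.mul_mem_left _ _ (Ideal.subset_span ⟨p, ?_⟩))
        show x p ^ (n p + j' p) = x p ^ (n p + (j p - 1))
        rw [hj'def, Function.update_self]
      have hsum1 : ∑ i, j' i = (j p - 1) + ∑ i ∈ Finset.univ.erase p, j i := by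
        rw [hj'def, Finset.sum_update_of_mem (Finset.mem_univ p),
          Finset.sdiff_singleton_eq_erase]
      have hsum2 : ∑ i, j i = j p + ∑ i ∈ Finset.univ.erase p, j i :=
        (Finset.add_sum_erase Finset.univ j (Finset.mem_univ p)).symm
      refine ih j' (by omega) (fun i => ?_) y h4
      by_cases h : i = p
      · subst h; rw [hj'def, Function.update_self]; omega
      · rw [hj'def, Function.update_of_ne h]; exact hj i

end Aux

/-- for an unconditioned strong d-sequence `x₁,…,x_l` (`l ≥ 1`) and
positive integers `n₁,…,n_l`, `(x₁⋯x_l)·(Σ_{i=1}^l x_i^{n_i})^lim ⊆ Σ_{i=1}^l x_i^{n_i+1}`. -/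
theorem usd_prod_mul_lim_subset {R : Type*} [CommRing R] {l : ℕ} (hl : 1 ≤ l)
    (x : Fin l → R) (hx : IsUSD x) (n : Fin l → ℕ) (hn : ∀ i, 0 < n i) :
    ∀ y ∈ ⨆ j : ℕ, (Ideal.span (Set.range fun i => x i ^ (n i + j))).colon
        (Ideal.span {(∏ i, x i) ^ j}),
      (∏ i, x i) * y ∈ Ideal.span (Set.range fun i => x i ^ (n i + 1)) := by
  intro y hy
  have hmono : Monotone (fun j : ℕ =>
      (Ideal.span (Set.range fun i => x i ^ (n i + j))).colon
        (Ideal.span {(∏ i, x i) ^ j})) := by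
    apply monotone_nat_of_le_succ
    intro j z hz
    rw [Ideal.mem_colon_span_singleton] at hz ⊢
    have h1 : (∏ i, x i) * (z * (∏ i, x i) ^ j)
        ∈ Ideal.span (Set.range fun i => x i ^ ((n i + j) + 1)) :=
      prod_mul_mem x (fun i => n i + j) hz
    have e : z * (∏ i, x i) ^ (j + 1) = (∏ i, x i) * (z * (∏ i, x i) ^ j) := by ring
    rw [e]
    exact h1
  rw [Submodule.mem_iSup_of_directed _ hmono.directed_le] at hy
  obtain ⟨j, hj⟩ := hy
  rw [Ideal.mem_colon_span_singleton] at hj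
  rcases Nat.eq_zero_or_pos j with rfl | hjpos
  · simp only [pow_zero, mul_one] at hj
    exact prod_mul_mem x n hj
  · have hj' : (∏ i, x i ^ j) * y ∈ Ideal.span (Set.range fun i => x i ^ (n i + j)) := by
      rw [Finset.prod_pow, mul_comm]
      exact hj
    exact descent hl hx n hn (∑ _i : Fin l, j) (fun _ => j) le_rfl (fun _ => hjpos) y hj'
end

section
/- Let R be a commutative ring and x₁,…,x_l an unconditioned strong d-sequence such that every element of the ideal 𝔞 lies in the radical of Σ_{i=1}^l x_i R. Then every permutation of x₁,…,x_l is an 𝔞-filter regular sequence; in fact, the ideal Σ_{i=1}^l x_i R annihilates ((Σ_{i∈Λ} x_i R) : Σ_{i∉Λ} x_i R) / (Σ_{i∈Λ} x_i R) for every proper subset Λ ⊊ {1,…,l}. -/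
/-- `y₁,…,y_l` is an `𝔞`-filter regular sequence: some power `𝔞^m` annihilates
`((y₁,…,y_{j}) : y_{j+1})/(y₁,…,y_{j})` for all `j` (0-based). -/
def IsFilterRegular {R : Type*} [CommRing R] {l : ℕ} (𝔞 : Ideal R) (y : Fin l → R) : Prop :=
  ∃ m : ℕ, ∀ j : Fin l,
    𝔞 ^ m * ((Ideal.span (y '' {i | i < j})).colon (Ideal.span {y j})) ≤
      Ideal.span (y '' {i | i < j})

/-!
If `y` is a d-sequence in every order and `p ≤ q`, then over `Iₚ = (y i : i < p)` the d-sequence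
condition for `y` gives `(Iₚ : y_p y_q) = (Iₚ : y_q)`, and for `y` with `p` and `q` swapped it
gives `(Iₚ : y_q y_p) = (Iₚ : y_p)`; so `(Iₚ : y_p) = (Iₚ : y_q)`. Every `y_q` therefore maps
`(Iₚ : y_p)` into `Iₚ` (trivially when `q < p`), i.e. `(y₁, …, y_l)` annihilates
`(Iₚ : y_p)/Iₚ`; in a Noetherian ring some power of `𝔞` lies in `(y₁, …, y_l)`.
-/

lemma Ideal.mul_colon_le {R : Type*} [CommRing R] (I J : Ideal R) : J * I.colon J ≤ I :=
  Ideal.mul_le.mpr fun r hr s hs => mul_comm r s ▸ Submodule.mem_colon.mp hs r hr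

lemma Ideal.sup_mul_colon_le {R : Type*} [CommRing R] (I J : Ideal R) :
    (I ⊔ J) * I.colon J ≤ I := by
  rw [Ideal.sup_mul]
  exact sup_le Ideal.mul_le_left (Ideal.mul_colon_le I J)

lemma IsUSD.isDSeq_comp {R : Type*} [CommRing R] {l : ℕ} {x : Fin l → R} (hx : IsUSD x)
    (σ : Equiv.Perm (Fin l)) : IsDSeq (x ∘ σ) := by
  simpa [Function.comp_def] using hx (fun _ => 1) (fun _ => one_pos) σ

section AnyOrder

variable {R : Type*} [CommRing R] {l : ℕ} {y : Fin l → R}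

lemma colon_span_singleton_eq_of_le (hy : ∀ σ : Equiv.Perm (Fin l), IsDSeq (y ∘ σ))
    {p q : Fin l} (hpq : p ≤ q) :
    (Ideal.span (y '' {i | i < p})).colon (Ideal.span {y p}) =
      (Ideal.span (y '' {i | i < p})).colon (Ideal.span {y q}) := by
  have hswap : (y ∘ Equiv.swap p q) '' {i | i < p} = y '' {i | i < p} := by
    rw [Set.image_comp]
    congr 1
    refine (Set.image_congr fun i (hi : i < p) => ?_).trans (Set.image_id _)
    exact Equiv.swap_apply_of_ne_of_ne hi.ne (hi.trans_le hpq).ne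
  have hpq_order := hy 1 p q hpq
  have hqp_order := hy (Equiv.swap p q) p q hpq
  simp only [Equiv.Perm.coe_one, Function.comp_id] at hpq_order
  rw [hswap] at hqp_order
  simp only [Function.comp_apply, Equiv.swap_apply_left, Equiv.swap_apply_right] at hqp_order
  rw [← hqp_order, mul_comm, hpq_order]

lemma span_range_mul_colon_le (hy : ∀ σ : Equiv.Perm (Fin l), IsDSeq (y ∘ σ)) (p : Fin l) :
    Ideal.span (Set.range y) * (Ideal.span (y '' {i | i < p})).colon (Ideal.span {y p}) ≤
      Ideal.span (y '' {i | i < p}) := by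
  set I := Ideal.span (y '' {i | i < p})
  have hcolon : I.colon (Ideal.span {y p}) ≤ I.colon (Ideal.span (Set.range y)) := by
    intro a ha
    rw [Ideal.colon_span, Submodule.mem_colon]
    rintro _ ⟨q, rfl⟩
    rcases lt_or_ge q p with hqp | hpq
    · exact I.mul_mem_left a (Ideal.subset_span ⟨q, hqp, rfl⟩)
    · rw [colon_span_singleton_eq_of_le hy hpq] at ha
      exact Ideal.mem_colon_span_singleton.mp ha
  exact (Ideal.mul_mono_right hcolon).trans (Ideal.mul_colon_le _ _)

end AnyOrder

/-- if `x₁,…,x_l` is an unconditioned strong d-sequence and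
`𝔞 ⊆ √(Σ x_i R)`, then every permutation of `x₁,…,x_l` is an `𝔞`-filter regular sequence;
indeed `Σ x_i R` annihilates `((Σ_{i∈Λ} x_i) : Σ_{i∉Λ} x_i)/(Σ_{i∈Λ} x_i)` for all
`Λ ⊊ {1,…,l}`. -/
theorem usd_filter_regular {R : Type*} [CommRing R] [IsNoetherianRing R] {l : ℕ}
    (x : Fin l → R) (hx : IsUSD x) (𝔞 : Ideal R)
    (h𝔞 : 𝔞 ≤ (Ideal.span (Set.range x)).radical) :
    (∀ σ : Equiv.Perm (Fin l), IsFilterRegular 𝔞 (x ∘ σ)) ∧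
      ∀ Λ : Set (Fin l), Λ ≠ Set.univ →
        Ideal.span (Set.range x) *
            ((Ideal.span (x '' Λ)).colon (Ideal.span (x '' Λᶜ))) ≤
          Ideal.span (x '' Λ) := by
  constructor
  · intro σ
    obtain ⟨m, hm⟩ := Ideal.exists_pow_le_of_le_radical_of_fg h𝔞 (IsNoetherian.noetherian 𝔞)
    refine ⟨m, fun j => (Ideal.mul_mono_left hm).trans ?_⟩
    have hσx := span_range_mul_colon_le (y := x ∘ σ) (fun τ => by
      simpa only [Equiv.Perm.coe_mul, Function.comp_assoc] using hx.isDSeq_comp (σ * τ)) j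
    rwa [EquivLike.range_comp] at hσx
  · intro Λ _
    rw [← Set.image_univ, ← Set.union_compl_self Λ, Set.image_union, Ideal.span_union]
    exact Ideal.sup_mul_colon_le _ _
end

section
/- Let R be a commutative Noetherian ring, 𝔞 an ideal, and x₁,…,x_l ∈ R. Then x₁,…,x_l is an 𝔞-filter regular sequence (i.e. some power of 𝔞 annihilates ((Σ_{i<j} x_i R):x_j)/(Σ_{i<j} x_i R) for all j = 1,…,l) if and only if for every prime 𝔭 not containing 𝔞, the images of x₁,…,x_l in R_𝔭 form a possibly improper regular sequence. -/
namespace Ideal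

variable {R : Type*} [CommRing R]

lemma exists_mem_colon_of_fg (M : Submonoid R) {I J : Ideal R} (hJ : J.FG)
    (h : ∀ c ∈ J, ∃ s ∈ M, s * c ∈ I) : ∃ s ∈ M, s ∈ I.colon J := by
  induction J, hJ using Submodule.fg_induction with
  | singleton c =>
    obtain ⟨s, hsM, hs⟩ := h c (mem_span_singleton_self c)
    exact ⟨s, hsM, mem_colon_span_singleton.mpr hs⟩
  | sup J₁ J₂ _ _ ih₁ ih₂ =>
    obtain ⟨s₁, hs₁M, hs₁⟩ := ih₁ fun c hc ↦ h c (mem_sup_left hc)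
    obtain ⟨s₂, hs₂M, hs₂⟩ := ih₂ fun c hc ↦ h c (mem_sup_right hc)
    refine ⟨s₁ * s₂, M.mul_mem hs₁M hs₂M, Submodule.mem_colon.mpr fun c hc ↦ ?_⟩
    obtain ⟨c₁, hc₁, c₂, hc₂, rfl⟩ := Submodule.mem_sup.mp hc
    have h₁ : s₁ * c₁ ∈ I := Submodule.mem_colon.mp hs₁ c₁ hc₁
    have h₂ : s₂ * c₂ ∈ I := Submodule.mem_colon.mp hs₂ c₂ hc₂
    rw [smul_eq_mul, mul_add, mul_right_comm, mul_assoc s₁ s₂]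
    exact add_mem (I.mul_mem_right s₂ h₁) (I.mul_mem_left s₁ h₂)

lemma le_radical_iff_forall_isPrime {𝔞 J : Ideal R} :
    𝔞 ≤ J.radical ↔ ∀ 𝔭 : Ideal R, 𝔭.IsPrime → J ≤ 𝔭 → 𝔞 ≤ 𝔭 := by
  rw [radical_eq_sInf, le_sInf_iff]
  exact ⟨fun h 𝔭 h𝔭 hJ ↦ h 𝔭 ⟨hJ, h𝔭⟩, fun h 𝔭 h𝔭 ↦ h 𝔭 h𝔭.2 h𝔭.1⟩

end Ideal

namespace IsLocalization

variable {R : Type*} [CommRing R] (M : Submonoid R) {S : Type*} [CommRing S] [Algebra R S]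

lemma map_le_map_iff_exists_mem_colon [IsLocalization M S] {I J : Ideal R} (hJ : J.FG) :
    J.map (algebraMap R S) ≤ I.map (algebraMap R S) ↔ ∃ s ∈ M, s ∈ I.colon J := by
  constructor
  · intro h
    refine Ideal.exists_mem_colon_of_fg M hJ fun c hc ↦ ?_
    have hc' : mk' S c (1 : M) ∈ I.map (algebraMap R S) := by
      rw [mk'_one]
      exact h (Ideal.mem_map_of_mem _ hc)
    exact (mk'_mem_map_algebraMap_iff M S I c 1).mp hc'
  · rintro ⟨s, hsM, hs⟩
    rw [Ideal.map_le_iff_le_comap]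
    intro c hc
    rw [Ideal.mem_comap, ← Ideal.unit_mul_mem_iff_mem _ (map_units S ⟨s, hsM⟩), ← map_mul]
    exact Ideal.mem_map_of_mem _ (Submodule.mem_colon.mp hs c hc)

lemma map_colon_span_singleton [IsLocalization M S] (I : Ideal R) (y : R) :
    (I.colon (Ideal.span {y})).map (algebraMap R S) =
      (I.map (algebraMap R S)).colon (Ideal.span {algebraMap R S y}) := by
  ext z
  obtain ⟨⟨r, s⟩, rfl⟩ := mk'_surjective M z
  rw [Ideal.mem_colon_span_singleton, mul_comm, mul_mk'_eq_mk'_of_mul,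
    mk'_mem_map_algebraMap_iff, mk'_mem_map_algebraMap_iff]
  simp only [Ideal.mem_colon_span_singleton, mul_assoc, mul_comm r y]

end IsLocalization

section

variable {R : Type*} [CommRing R]

lemma Ideal.forall_mul_mem_map_atPrime_iff [IsNoetherianRing R] (I : Ideal R) (y : R)
    (𝔭 : Ideal R) [𝔭.IsPrime] :
    (∀ z : Localization.AtPrime 𝔭,
      algebraMap R (Localization.AtPrime 𝔭) y * z ∈ I.map (algebraMap R _) →
        z ∈ I.map (algebraMap R _)) ↔
      ¬ I.colon (I.colon (Ideal.span {y})) ≤ 𝔭 := by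
  have hcolon : (∀ z : Localization.AtPrime 𝔭,
      algebraMap R (Localization.AtPrime 𝔭) y * z ∈ I.map (algebraMap R _) →
        z ∈ I.map (algebraMap R _)) ↔
      (I.map (algebraMap R (Localization.AtPrime 𝔭))).colon
          (Ideal.span {algebraMap R (Localization.AtPrime 𝔭) y}) ≤ I.map (algebraMap R _) := by
    simp only [SetLike.le_def, Ideal.mem_colon_span_singleton, mul_comm]
  rw [hcolon, ← IsLocalization.map_colon_span_singleton 𝔭.primeCompl,
    IsLocalization.map_le_map_iff_exists_mem_colon 𝔭.primeCompl (IsNoetherian.noetherian _),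
    SetLike.not_le_iff_exists]
  exact exists_congr fun _ ↦ and_comm

lemma isFilterRegular_iff_forall_le_radical [IsNoetherianRing R] (𝔞 : Ideal R) {l : ℕ}
    (x : Fin l → R) :
    IsFilterRegular 𝔞 x ↔ ∀ j : Fin l,
      𝔞 ≤ ((Ideal.span (x '' {i | i < j})).colon
        ((Ideal.span (x '' {i | i < j})).colon (Ideal.span {x j}))).radical := by
  constructor
  · rintro ⟨m, hm⟩ j a ha
    refine ⟨m, Submodule.mem_colon.mpr fun c hc ↦ ?_⟩
    exact hm j (Ideal.mul_mem_mul (Ideal.pow_mem_pow ha m) hc)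
  · intro h
    choose m hm using fun j ↦ Ideal.exists_pow_le_of_le_radical_of_fg (h j)
      (IsNoetherian.noetherian 𝔞)
    refine ⟨Finset.univ.sup m, fun j ↦ Ideal.mul_le.mpr fun a ha c hc ↦ ?_⟩
    have ha' := hm j (Ideal.pow_le_pow_right (Finset.le_sup (Finset.mem_univ j)) ha)
    exact Submodule.mem_colon.mp ha' c hc

end

/-- `x₁,…,x_l` is an `𝔞`-filter regular sequence if and only if, for every
prime `𝔭` not containing `𝔞`, the images of `x₁,…,x_l` in `R_𝔭` form a possibly improper
regular sequence. -/
theorem isFilterRegular_iff_localization {R : Type*} [CommRing R] [IsNoetherianRing R]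
    (𝔞 : Ideal R) {l : ℕ} (x : Fin l → R) :
    IsFilterRegular 𝔞 x ↔
      ∀ (𝔭 : Ideal R) [𝔭.IsPrime], ¬ 𝔞 ≤ 𝔭 →
        ∀ j : Fin l, ∀ z : Localization.AtPrime 𝔭,
          algebraMap R (Localization.AtPrime 𝔭) (x j) * z ∈
              Ideal.span ((fun i => algebraMap R (Localization.AtPrime 𝔭) (x i)) ''
                {i | i < j}) →
            z ∈ Ideal.span ((fun i => algebraMap R (Localization.AtPrime 𝔭) (x i)) ''
              {i | i < j}) := by
  have span_eq (𝔭 : Ideal R) [𝔭.IsPrime] (j : Fin l) :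
      Ideal.span ((fun i => algebraMap R (Localization.AtPrime 𝔭) (x i)) '' {i | i < j}) =
        (Ideal.span (x '' {i | i < j})).map (algebraMap R _) := by
    rw [Ideal.map_span, Set.image_image]
  simp only [span_eq, Ideal.forall_mul_mem_map_atPrime_iff,
    isFilterRegular_iff_forall_le_radical, Ideal.le_radical_iff_forall_isPrime]
  exact ⟨fun h 𝔭 _ h𝔞 j hle ↦ h𝔞 (h j 𝔭 ‹_› hle),
    fun h j 𝔭 _ hle ↦ by_contra fun h𝔞 ↦ h 𝔭 h𝔞 j hle⟩
end
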